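/- Let K ≥ 2. Then dim_H Asym(σ_K) = 1, and dim_H Prox(σ_K) = dim_H Dist(σ_K) = dim_H LY(σ_K) = 2, where these are subsets of Σ_K × Σ_K. -/

import Mathlib

open Filter Set MeasureTheory Topology TopologicalSpace

noncomputable section

/-- The symbolic space `Σ_K` on `K` symbols: sequences `ℕ → Fin K`. -/
def SymbSp (K : ℕ) : Type := ℕ → Fin K

namespace SymbSp

variable {K : ℕ}

theorem exists_ne {x y : SymbSp K} (h : ¬x = y) : ∃ i, x i ≠ y i := by
  by_contra hc
  push_neg at hc
  exact h (funext hc)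

open Classical in
/-- The metric `ρ(x,y) = K^{-δ(x,y)}` on `Σ_K`. -/
def sdist (x y : SymbSp K) : ℝ :=
  if h : x = y then 0 else ((K : ℝ))⁻¹ ^ Nat.find (exists_ne h)

theorem sdist_self (x : SymbSp K) : sdist x x = 0 := by
  unfold sdist
  exact dif_pos rfl

open Classical in
theorem sdist_eq {x y : SymbSp K} (h : ¬x = y) :
    sdist x y = ((K : ℝ))⁻¹ ^ Nat.find (exists_ne h) := by
  unfold sdist
  exact dif_neg h

theorem sdist_nonneg' (x y : SymbSp K) : 0 ≤ sdist x y := by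
  unfold sdist
  split
  · exact le_rfl
  · positivity

theorem inv_cast_le_one (K : ℕ) : ((K : ℝ))⁻¹ ≤ 1 := by
  rcases Nat.eq_zero_or_pos K with h | h
  · simp [h]
  · exact inv_le_one_of_one_le₀ (by exact_mod_cast h)

open Classical in
theorem eq_of_lt_find {x y : SymbSp K} (h : ¬x = y) {i : ℕ}
    (hi : i < Nat.find (exists_ne h)) : x i = y i :=
  not_not.mp (Nat.find_min (exists_ne h) hi)

open Classical in
theorem sdist_le_of_agree {x y : SymbSp K} {n : ℕ} (h : ∀ i < n, x i = y i) :
    sdist x y ≤ ((K : ℝ))⁻¹ ^ n := by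
  by_cases hxy : x = y
  · rw [hxy, sdist_self]; positivity
  · rw [sdist_eq hxy]
    apply pow_le_pow_of_le_one (by positivity) (inv_cast_le_one K)
    rw [Nat.le_find_iff]
    intro m hm
    simp only [ne_eq, not_not]
    exact h m hm

open Classical in
theorem sdist_comm (x y :  SymbSp K) : sdist x y = sdist y x := by
  by_cases h : x = y
  · rw [h]
  · rw [sdist_eq h, sdist_eq (fun hyx => h hyx.symm)]
    congr 1
    exact le_antisymm (Nat.find_mono fun n hn => hn.symm)
      (Nat.find_mono fun n hn => hn.symm)

open Classical in
theorem sdist_le_max (x y z : SymbSp K) : sdist x z ≤ max (sdist x y) (sdist y z) := by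
  by_cases hxz : x = z
  · rw [hxz, sdist_self]
    exact le_max_of_le_left (sdist_nonneg' _ _)
  by_cases hxy : x = y
  · rw [hxy]; exact le_max_right _ _
  by_cases hyz : y = z
  · rw [← hyz]; exact le_max_left _ _
  rcases le_total (Nat.find (exists_ne hxy)) (Nat.find (exists_ne hyz)) with hle | hle
  · refine le_max_of_le_left ?_
    rw [sdist_eq hxy]
    exact sdist_le_of_agree fun i hi =>
      (eq_of_lt_find hxy hi).trans (eq_of_lt_find hyz (lt_of_lt_of_le hi hle))
  · refine le_max_of_le_right ?_
    rw [sdist_eq hyz]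
    exact sdist_le_of_agree fun i hi =>
      (eq_of_lt_find hxy (lt_of_lt_of_le hi hle)).trans (eq_of_lt_find hyz hi)

theorem eq_of_sdist_eq_zero {x y : SymbSp K} (h : sdist x y = 0) : x = y := by
  by_contra hxy
  rw [sdist_eq hxy] at h
  have hK : (0 : ℝ) < (K : ℝ) := by exact_mod_cast Fin.pos (x 0)
  exact absurd h (ne_of_gt (pow_pos (inv_pos.mpr hK) _))

instance : MetricSpace (SymbSp K) where
  dist := sdist
  dist_self := sdist_self
  dist_comm := sdist_comm
  dist_triangle x y z :=
    (sdist_le_max x y z).trans (max_le_add_of_nonneg (sdist_nonneg' _ _) (sdist_nonneg' _ _))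
  eq_of_dist_eq_zero := fun h => eq_of_sdist_eq_zero h

instance : MeasurableSpace (SymbSp K) := borel _

instance : BorelSpace (SymbSp K) := ⟨rfl⟩

instance : SeparableSpace (SymbSp K) := by
  obtain hK | hK | hK : K = 0 ∨ K = 1 ∨ 2 ≤ K := by omega
  · subst hK
    haveI : IsEmpty (SymbSp 0) := ⟨fun x => (x 0).elim0⟩
    exact ⟨⟨Set.univ, Set.countable_univ, dense_univ⟩⟩
  · subst hK
    haveI : Subsingleton (SymbSp 1) := ⟨fun x y => funext fun i => Subsingleton.elim _ _⟩
    exact ⟨⟨Set.univ, Set.countable_univ, dense_univ⟩⟩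
  · refine ⟨⟨Set.range (fun w : (Σ n : ℕ, (Fin n → Fin K)) =>
      (fun i => if h : i < w.1 then w.2 ⟨i, h⟩ else ⟨0, by omega⟩ : SymbSp K)),
      Set.countable_range _, ?_⟩⟩
    rw [Metric.dense_iff]
    intro x r hr
    obtain ⟨n, hn⟩ : ∃ n : ℕ, ((K : ℝ))⁻¹ ^ n < r :=
      exists_pow_lt_of_lt_one hr (inv_lt_one_of_one_lt₀ (by exact_mod_cast hK))
    refine ⟨(fun i => if h : i < n then x i else ⟨0, by omega⟩ : SymbSp K),
      ?_, ⟨⟨n, fun j => x j⟩, rfl⟩⟩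
    refine Metric.mem_ball.mpr ?_
    exact lt_of_le_of_lt (sdist_le_of_agree fun i hi => dif_pos hi) hn

instance : SecondCountableTopology (SymbSp K) :=
  UniformSpace.secondCountable_of_separable _

end SymbSp

/-- The shift map `σ_K` on `Σ_K`. -/
def shift (K : ℕ) : SymbSp K → SymbSp K := fun x i => x (i + 1)

end
/-- The set of asymptotic pairs of `σ_K`. -/
def AsymSet (K : ℕ) : Set (SymbSp K × SymbSp K) :=
  {z | Filter.Tendsto (fun i : ℕ => dist ((shift K)^[i] z.1) ((shift K)^[i] z.2))
        Filter.atTop (nhds 0)}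

/-- The set of proximal pairs of `σ_K`. -/
def ProxSet (K : ℕ) : Set (SymbSp K × SymbSp K) :=
  {z | Filter.liminf (fun i : ℕ => dist ((shift K)^[i] z.1) ((shift K)^[i] z.2))
        Filter.atTop = 0}

/-- The set of distal pairs of `σ_K`. -/
def DistSet (K : ℕ) : Set (SymbSp K × SymbSp K) :=
  {z | 0 < Filter.liminf (fun i : ℕ => dist ((shift K)^[i] z.1) ((shift K)^[i] z.2))
        Filter.atTop}

/-- The set of Li–Yorke pairs of `σ_K`: proximal but not asymptotic pairs. -/
def LYset (K : ℕ) : Set (SymbSp K × SymbSp K) := ProxSet K \ AsymSet K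

/-!
`Σ_K` has Hausdorff dimension 1: the `K ^ n` cylinders of length `n` have diameter `K⁻¹ ^ n`,
so `μH[1] Σ_K ≤ 1`, and reading a sequence as base-`K` digits is a `1`-Lipschitz surjection onto
`[0, 1]`. Reading a pair of sequences as one sequence over the alphabet `Fin K × Fin K` squares
distances, so `Σ_K × Σ_K` has dimension `2`.

A pair is asymptotic iff its components eventually coincide, so `Asym(σ_K)` is a countable union of
isometric copies of `Σ_K`: the graphs of the maps overwriting a finite prefix.

For the lower bounds, spread an arbitrary pair along the free positions of `ℕ` and write a fixed
pattern on a set of forced positions of density at most `1 / (q + 1)`. Reading the pair back off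
the free positions is Hölder of exponent `q / (q + 1)` on the image, so the image has dimension at
least `2 q / (q + 1)`. Distinct symbols forced at the multiples of `q + 1` make every pair of the
image distal; equal symbols forced on the blocks `[(q + 1) j², (q + 1) j² + j)` make it proximal.
Finally `Prox ⊆ LY ∪ Asym` and `dim_H Asym = 1 < 2` give `dim_H LY = 2`.
-/

open scoped NNReal ENNReal

theorem holderOnWith_of_dist_le {X Y : Type*} [PseudoMetricSpace X] [PseudoMetricSpace Y]
    {f : X → Y} {C r : ℝ≥0} {s : Set X}
    (h : ∀ x ∈ s, ∀ y ∈ s, dist (f x) (f y) ≤ C * dist x y ^ (r : ℝ)) :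
    HolderOnWith C r f s := fun x hx y hy => by
  rw [edist_dist, edist_dist, ← ENNReal.ofReal_coe_nnreal,
    ENNReal.ofReal_rpow_of_nonneg dist_nonneg r.coe_nonneg, ← ENNReal.ofReal_mul C.coe_nonneg]
  exact ENNReal.ofReal_le_ofReal (h x hx y hy)

theorem inv_pow_le_pow_mul_rpow {b α : ℝ} (hb : 1 < b) {n N C : ℕ} (h : α * n ≤ N + C) :
    b⁻¹ ^ N ≤ b ^ C * (b⁻¹ ^ n) ^ α := by
  have hb0 : 0 < b := one_pos.trans hb
  simp only [← Real.rpow_natCast, Real.inv_rpow hb0.le, ← Real.rpow_neg hb0.le,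
    ← Real.rpow_mul hb0.le, ← Real.rpow_add hb0, Real.rpow_le_rpow_left_iff hb]
  linarith

namespace Nat

theorem count_not_add_count (p : ℕ → Prop) [DecidablePred p] (m : ℕ) :
    count (fun i => ¬p i) m + count p m = m := by
  rw [count_eq_card_filter_range, count_eq_card_filter_range, add_comm,
    Finset.card_filter_add_card_filter_not, Finset.card_range]

theorem le_count_not_of_mul_count_le {p : ℕ → Prop} [DecidablePred p] {q : ℕ}
    (hp : ∀ m, (q + 1) * count p m ≤ m + (q + 1)) (m : ℕ) :
    (((q : ℝ≥0) / (q + 1) : ℝ≥0) : ℝ) * m ≤ count (fun i => ¬p i) m + 1 := by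
  have hsum : (count (fun i => ¬p i) m : ℝ) + count p m = m := by
    exact_mod_cast count_not_add_count p m
  have hcount : ((q : ℝ) + 1) * count p m ≤ m + (q + 1) := by exact_mod_cast hp m
  rw [NNReal.coe_div, NNReal.coe_add, NNReal.coe_one, NNReal.coe_natCast, div_mul_eq_mul_div,
    div_le_iff₀ (by positivity)]
  nlinarith

theorem infinite_setOf_of_forall_le_count {p : ℕ → Prop} [DecidablePred p] {α C : ℝ}
    (hα : 0 < α) (hp : ∀ m : ℕ, α * m ≤ count p m + C) : {i | p i}.Infinite := by
  intro hfin
  obtain ⟨m, hm⟩ := exists_nat_gt ((hfin.toFinset.card + C) / α)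
  have hcount : (count p m : ℝ) ≤ hfin.toFinset.card := by exact_mod_cast count_le_card hfin m
  rw [div_lt_iff₀ hα] at hm
  linarith [hp m]

end Nat

namespace SymbSp

variable {K : ℕ}

theorem exists_dist_eq_inv_pow {x y : SymbSp K} (h : x ≠ y) :
    ∃ n, dist x y = (K : ℝ)⁻¹ ^ n ∧ ∀ i < n, x i = y i := by
  classical
  exact ⟨_, sdist_eq h, fun i hi => eq_of_lt_find h hi⟩

theorem dist_le_inv_pow_iff (hK : 2 ≤ K) {x y : SymbSp K} {n : ℕ} :
    dist x y ≤ (K : ℝ)⁻¹ ^ n ↔ ∀ i < n, x i = y i := by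
  refine ⟨fun h => ?_, sdist_le_of_agree⟩
  rcases eq_or_ne x y with rfl | hxy
  · exact fun _ _ => rfl
  obtain ⟨m, hm, hagree⟩ := exists_dist_eq_inv_pow hxy
  have hKinv : (K : ℝ)⁻¹ < 1 := inv_lt_one_of_one_lt₀ (by exact_mod_cast hK)
  rw [hm, pow_le_pow_iff_right_of_lt_one₀ (by positivity) hKinv] at h
  exact fun i hi => hagree i (lt_of_lt_of_le hi h)

theorem dist_le_one (x y : SymbSp K) : dist x y ≤ 1 := by
  have h : dist x y ≤ (K : ℝ)⁻¹ ^ 0 := sdist_le_of_agree (by simp)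
  rwa [pow_zero] at h

theorem prod_dist_le_inv_pow_iff (hK : 2 ≤ K) {z z' : SymbSp K × SymbSp K} {n : ℕ} :
    dist z z' ≤ (K : ℝ)⁻¹ ^ n ↔ ∀ i < n, z.1 i = z'.1 i ∧ z.2 i = z'.2 i := by
  simp only [Prod.dist_eq, max_le_iff, dist_le_inv_pow_iff hK, ← forall₂_and]

theorem exists_prod_dist_eq_inv_pow (hK : 2 ≤ K) {z z' : SymbSp K × SymbSp K} (h : z ≠ z') :
    ∃ n, dist z z' = (K : ℝ)⁻¹ ^ n ∧ ∀ i < n, z.1 i = z'.1 i ∧ z.2 i = z'.2 i := by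
  suffices ∃ n, dist z z' = (K : ℝ)⁻¹ ^ n by
    obtain ⟨n, hn⟩ := this
    exact ⟨n, hn, (prod_dist_le_inv_pow_iff hK).1 hn.le⟩
  have hne : dist z z' ≠ 0 := dist_ne_zero.2 h
  rcases max_choice (dist z.1 z'.1) (dist z.2 z'.2) with hmax | hmax <;>
    rw [← Prod.dist_eq] at hmax <;> rw [hmax] at hne ⊢ <;>
    exact (exists_dist_eq_inv_pow (dist_ne_zero.1 hne)).imp fun _ => And.left

theorem lipschitzWith_ofDigits : LipschitzWith 1 (fun x : SymbSp K => Real.ofDigits x) := by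
  refine LipschitzWith.of_dist_le_mul fun x y => ?_
  rcases eq_or_ne x y with rfl | hxy
  · simp
  obtain ⟨n, hn, hagree⟩ := exists_dist_eq_inv_pow hxy
  rw [hn, NNReal.coe_one, one_mul, Real.dist_eq, inv_pow]
  exact Real.abs_ofDigits_sub_ofDigits_le hagree

theorem hausdorffMeasure_one_univ_le (hK : 2 ≤ K) : μH[1] (univ : Set (SymbSp K)) ≤ 1 := by
  have hKpos : (0 : ℝ) < K := by positivity
  let cylinder (n : ℕ) (w : Fin n → Fin K) : Set (SymbSp K) := {x | ∀ i : Fin n, x i = w i}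
  have hdiam (n : ℕ) (w : Fin n → Fin K) :
      Metric.ediam (cylinder n w) ≤ ENNReal.ofReal ((K : ℝ)⁻¹ ^ n) :=
    Metric.ediam_le fun x hx y hy => by
      rw [edist_dist]
      exact ENNReal.ofReal_le_ofReal
        (sdist_le_of_agree fun i hi => (hx ⟨i, hi⟩).trans (hy ⟨i, hi⟩).symm)
  have hcover (n : ℕ) : (univ : Set (SymbSp K)) ⊆ ⋃ w, cylinder n w := fun x _ =>
    mem_iUnion.2 ⟨fun i => x i, fun _ => rfl⟩
  have hsmall : Tendsto (fun n : ℕ => ENNReal.ofReal ((K : ℝ)⁻¹ ^ n)) atTop (𝓝 0) := by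
    simpa using ENNReal.tendsto_ofReal (tendsto_pow_atTop_nhds_zero_of_lt_one (by positivity)
      (inv_lt_one_of_one_lt₀ (by exact_mod_cast hK)))
  have hsum (n : ℕ) : ∑ w, Metric.ediam (cylinder n w) ^ (1 : ℝ) ≤ 1 := calc
    _ ≤ ∑ _w : Fin n → Fin K, ENNReal.ofReal ((K : ℝ)⁻¹ ^ n) :=
      Finset.sum_le_sum fun w _ => by simpa using hdiam n w
    _ = 1 := by
      rw [Finset.sum_const, Finset.card_univ, Fintype.card_fun, Fintype.card_fin,
        Fintype.card_fin, nsmul_eq_mul, ← ENNReal.ofReal_natCast,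
        ← ENNReal.ofReal_mul (by positivity)]
      push_cast
      rw [← mul_pow, mul_inv_cancel₀ hKpos.ne', one_pow, ENNReal.ofReal_one]
  refine (Measure.hausdorffMeasure_le_liminf_sum 1 univ _ hsmall cylinder (.of_forall hdiam)
    (.of_forall hcover)).trans ?_
  exact liminf_le_of_frequently_le' (.of_forall hsum)

theorem dimH_univ (hK : 2 ≤ K) : dimH (univ : Set (SymbSp K)) = 1 := by
  refine le_antisymm ?_ ?_
  · have hfin : μH[((1 : ℝ≥0) : ℝ)] (univ : Set (SymbSp K)) ≠ ⊤ :=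
      ne_top_of_le_ne_top ENNReal.one_ne_top (by simpa using hausdorffMeasure_one_univ_le hK)
    simpa using dimH_le_of_hausdorffMeasure_ne_top hfin
  · calc (1 : ℝ≥0∞) = dimH (Icc (0 : ℝ) 1) := by
          rw [Real.dimH_of_nonempty_interior] <;> simp
      _ ≤ dimH ((fun x : SymbSp K => Real.ofDigits x) '' univ) :=
          dimH_mono (Real.ofDigits_SurjOn (by omega))
      _ ≤ _ := lipschitzWith_ofDigits.dimH_image_le _

def pairEquiv (K : ℕ) : SymbSp K × SymbSp K ≃ SymbSp (K * K) where
  toFun z i := finProdFinEquiv (z.1 i, z.2 i)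
  invFun w := (fun i => (finProdFinEquiv.symm (w i)).1, fun i => (finProdFinEquiv.symm (w i)).2)
  left_inv z := Prod.ext (funext fun i => by simp) (funext fun i => by simp)
  right_inv w := funext fun i => finProdFinEquiv.apply_symm_apply (w i)

theorem pairEquiv_apply (z : SymbSp K × SymbSp K) (i : ℕ) :
    pairEquiv K z i = finProdFinEquiv (z.1 i, z.2 i) := rfl

theorem pairEquiv_symm_apply (w : SymbSp (K * K)) :
    (pairEquiv K).symm w =
      (fun i => (finProdFinEquiv.symm (w i)).1, fun i => (finProdFinEquiv.symm (w i)).2) := rfl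

theorem inv_cast_mul_self_pow (n : ℕ) :
    ((K * K : ℕ) : ℝ)⁻¹ ^ n = ((K : ℝ)⁻¹ ^ n) ^ (2 : ℝ) := by
  rw [Real.rpow_two, Nat.cast_mul, mul_inv, mul_pow, sq]

theorem holderWith_pairEquiv (hK : 2 ≤ K) : HolderWith 1 2 (pairEquiv K) := by
  refine holderOnWith_univ.1 (holderOnWith_of_dist_le fun z _ z' _ => ?_)
  rcases eq_or_ne z z' with rfl | hzz
  · simp
  obtain ⟨n, hn, hagree⟩ := exists_prod_dist_eq_inv_pow hK hzz
  have hpair : dist (pairEquiv K z) (pairEquiv K z') ≤ ((K * K : ℕ) : ℝ)⁻¹ ^ n :=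
    sdist_le_of_agree fun i hi => by
      rw [pairEquiv_apply, pairEquiv_apply, (hagree i hi).1, (hagree i hi).2]
  rwa [hn, NNReal.coe_one, one_mul, NNReal.coe_ofNat, ← inv_cast_mul_self_pow]

theorem holderWith_pairEquiv_symm (hK : 2 ≤ K) : HolderWith 1 2⁻¹ (pairEquiv K).symm := by
  have hKK : 2 ≤ K * K := hK.trans (Nat.le_mul_self K)
  refine holderOnWith_univ.1 (holderOnWith_of_dist_le fun w _ w' _ => ?_)
  rcases eq_or_ne w w' with rfl | hww
  · simp
  obtain ⟨n, hn, hagree⟩ := exists_dist_eq_inv_pow hww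
  have hunpair : dist ((pairEquiv K).symm w) ((pairEquiv K).symm w') ≤ (K : ℝ)⁻¹ ^ n :=
    (prod_dist_le_inv_pow_iff hK).2 fun i hi => by simp [pairEquiv_symm_apply, hagree i hi]
  rw [hn]
  convert hunpair using 1
  rw [NNReal.coe_one, one_mul, inv_cast_mul_self_pow, ← Real.rpow_mul (by positivity)]
  norm_num

theorem dimH_univ_prod (hK : 2 ≤ K) : dimH (univ : Set (SymbSp K × SymbSp K)) = 2 := by
  have hKK : 2 ≤ K * K := hK.trans (Nat.le_mul_self K)
  have hle := (holderWith_pairEquiv_symm hK).dimH_image_le (by norm_num) univ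
  have hge := (holderWith_pairEquiv hK).dimH_image_le (by norm_num) univ
  rw [image_univ, Equiv.range_eq_univ, dimH_univ hKK] at hle hge
  refine le_antisymm (hle.trans_eq ?_) ?_
  · rw [ENNReal.coe_inv two_ne_zero, ENNReal.coe_ofNat, ENNReal.div_eq_inv_mul, inv_inv, mul_one]
  · rwa [ENNReal.le_div_iff_mul_le (by simp) (by simp), one_mul, ENNReal.coe_ofNat] at hge

theorem shift_iterate_apply (x : SymbSp K) (i j : ℕ) : (shift K)^[i] x j = x (j + i) := by
  induction i generalizing x with
  | zero => rfl
  | succ i ih => rw [Function.iterate_succ_apply, ih]; rfl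

noncomputable def orbitDist (K : ℕ) (z : SymbSp K × SymbSp K) (i : ℕ) : ℝ :=
  dist ((shift K)^[i] z.1) ((shift K)^[i] z.2)

theorem orbitDist_le_inv_pow_iff (hK : 2 ≤ K) {z : SymbSp K × SymbSp K} {i n : ℕ} :
    orbitDist K z i ≤ (K : ℝ)⁻¹ ^ n ↔ ∀ t < n, z.1 (t + i) = z.2 (t + i) := by
  simp only [orbitDist, dist_le_inv_pow_iff hK, shift_iterate_apply]

theorem isBoundedUnder_ge_orbitDist (z : SymbSp K × SymbSp K) :
    IsBoundedUnder (· ≥ ·) atTop (orbitDist K z) :=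
  isBoundedUnder_of ⟨0, fun _ => dist_nonneg⟩

theorem isCoboundedUnder_ge_orbitDist (z : SymbSp K × SymbSp K) :
    IsCoboundedUnder (· ≥ ·) atTop (orbitDist K z) :=
  isCoboundedUnder_ge_of_le atTop fun _ => dist_le_one _ _

theorem mem_asymSet_iff (hK : 2 ≤ K) {z : SymbSp K × SymbSp K} :
    z ∈ AsymSet K ↔ ∃ N, ∀ i ≥ N, z.1 i = z.2 i := by
  change Tendsto (orbitDist K z) atTop (𝓝 0) ↔ _
  constructor
  · intro h
    have hKinv : (0 : ℝ) < (K : ℝ)⁻¹ := inv_pos.2 (by exact_mod_cast (by omega : 0 < K))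
    obtain ⟨N, hN⟩ := eventually_atTop.1 (h.eventually_lt_const hKinv)
    refine ⟨N, fun i hi => ?_⟩
    have hle : orbitDist K z i ≤ (K : ℝ)⁻¹ ^ 1 := by simpa using (hN i hi).le
    simpa using (orbitDist_le_inv_pow_iff hK).1 hle 0 one_pos
  · rintro ⟨N, hN⟩
    refine tendsto_const_nhds.congr' (eventually_atTop.2 ⟨N, fun i hi => ?_⟩)
    have heq : (shift K)^[i] z.1 = (shift K)^[i] z.2 :=
      funext fun t => by simp only [shift_iterate_apply, hN (t + i) (by omega)]
    simp [orbitDist, heq]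

theorem mem_proxSet_of_forall_exists (hK : 2 ≤ K) {z : SymbSp K × SymbSp K}
    (h : ∀ n N, ∃ i ≥ N, ∀ t < n, z.1 (t + i) = z.2 (t + i)) : z ∈ ProxSet K := by
  change liminf (orbitDist K z) atTop = 0
  have hle (n : ℕ) : liminf (orbitDist K z) atTop ≤ (K : ℝ)⁻¹ ^ n := by
    refine liminf_le_of_frequently_le (frequently_atTop.2 fun N => ?_)
      (isBoundedUnder_ge_orbitDist z)
    obtain ⟨i, hiN, hi⟩ := h n N
    exact ⟨i, hiN, (orbitDist_le_inv_pow_iff hK).2 hi⟩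
  refine le_antisymm (ge_of_tendsto' (tendsto_pow_atTop_nhds_zero_of_lt_one (by positivity)
    (inv_lt_one_of_one_lt₀ (by exact_mod_cast hK))) hle) ?_
  exact le_liminf_of_le (isCoboundedUnder_ge_orbitDist z) (.of_forall fun _ => dist_nonneg)

theorem mem_distSet_of_forall_exists_ne (hK : 2 ≤ K) {z : SymbSp K × SymbSp K} (n : ℕ)
    (h : ∀ i, ∃ t < n, z.1 (t + i) ≠ z.2 (t + i)) : z ∈ DistSet K := by
  change 0 < liminf (orbitDist K z) atTop
  refine lt_of_lt_of_le (by positivity : (0 : ℝ) < (K : ℝ)⁻¹ ^ n)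
    (le_liminf_of_le (isCoboundedUnder_ge_orbitDist z) (.of_forall fun i => ?_))
  by_contra hlt
  obtain ⟨t, ht, hne⟩ := h i
  exact hne ((orbitDist_le_inv_pow_iff hK).1 (not_le.1 hlt).le t ht)

def patch (l : List (Fin K)) (x : SymbSp K) : SymbSp K :=
  fun i => if h : i < l.length then l[i] else x i

theorem dist_patch_le (l : List (Fin K)) (x y : SymbSp K) :
    dist (patch l x) (patch l y) ≤ dist x y := by
  rcases eq_or_ne x y with rfl | hxy
  · simp
  obtain ⟨n, hn, hagree⟩ := exists_dist_eq_inv_pow hxy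
  rw [hn]
  refine sdist_le_of_agree fun i hi => ?_
  simp only [patch, hagree i hi]

theorem isometry_prod_patch (l : List (Fin K)) : Isometry fun x : SymbSp K => (x, patch l x) :=
  Isometry.of_dist_eq fun x y => by rw [Prod.dist_eq, max_eq_left (dist_patch_le l x y)]

theorem asymSet_eq_iUnion (hK : 2 ≤ K) :
    AsymSet K = ⋃ l : List (Fin K), range fun x => (x, patch l x) := by
  ext z
  simp only [mem_asymSet_iff hK, mem_iUnion, mem_range]
  constructor
  · rintro ⟨N, hN⟩
    refine ⟨List.ofFn fun i : Fin N => z.2 i, z.1, Prod.ext rfl (funext fun i => ?_)⟩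
    by_cases hi : i < N
    · simp [patch, hi]
    · simp [patch, hi, hN i (by omega)]
  · rintro ⟨l, x, rfl⟩
    exact ⟨l.length, fun i hi => by simp [patch, not_lt.2 hi]⟩

theorem dimH_asymSet (hK : 2 ≤ K) : dimH (AsymSet K) = 1 := by
  simp_rw [asymSet_eq_iUnion hK, dimH_iUnion, ← image_univ, (isometry_prod_patch _).dimH_image,
    dimH_univ hK, ciSup_const]

section Spread

variable (p : ℕ → Prop) [DecidablePred p]

def spread (c : ℕ → Fin K) (x : SymbSp K) : SymbSp K :=
  fun i => if p i then x (Nat.count p i) else c i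

noncomputable def subseq (x : SymbSp K) : SymbSp K := fun k => x (Nat.nth p k)

variable {p}

theorem spread_of_not {i : ℕ} (h : ¬p i) (c : ℕ → Fin K) (x : SymbSp K) :
    spread p c x i = c i := if_neg h

theorem spread_nth (hp : {i | p i}.Infinite) (c : ℕ → Fin K) (x : SymbSp K) (k : ℕ) :
    spread p c x (Nat.nth p k) = x k := by
  rw [spread, if_pos (Nat.nth_mem_of_infinite hp k), Nat.count_nth_of_infinite hp]

theorem subseq_spread (hp : {i | p i}.Infinite) (c : ℕ → Fin K) (x : SymbSp K) :
    subseq p (spread p c x) = x :=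
  funext (spread_nth hp c x)

theorem prodMap_subseq_spread (hp : {i | p i}.Infinite) (a b : ℕ → Fin K)
    (z : SymbSp K × SymbSp K) :
    Prod.map (subseq p) (subseq p) (Prod.map (spread p a) (spread p b) z) = z :=
  Prod.ext (subseq_spread hp a z.1) (subseq_spread hp b z.2)

/-- Agreement on `[0, m)` after spreading gives agreement on `[0, count p m)` before. -/
theorem holderOnWith_subseq (hK : 2 ≤ K) {α : ℝ≥0} {C : ℕ}
    (hp : ∀ m : ℕ, (α : ℝ) * m ≤ Nat.count p m + C) (hinf : {i | p i}.Infinite)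
    (a b : ℕ → Fin K) :
    HolderOnWith ((K : ℝ≥0) ^ C) α (Prod.map (subseq p) (subseq p))
      (range (Prod.map (spread p a) (spread p b))) := by
  refine holderOnWith_of_dist_le ?_
  rintro _ ⟨z, rfl⟩ _ ⟨z', rfl⟩
  rw [prodMap_subseq_spread hinf, prodMap_subseq_spread hinf]
  rcases eq_or_ne (Prod.map (spread p a) (spread p b) z)
    (Prod.map (spread p a) (spread p b) z') with heq | hne
  · have hzz : z = z' := by
      simpa only [prodMap_subseq_spread hinf] using congrArg (Prod.map (subseq p) (subseq p)) heq
    simp only [hzz, dist_self]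
    positivity
  obtain ⟨n, hn, hagree⟩ := exists_prod_dist_eq_inv_pow hK hne
  have hz : dist z z' ≤ (K : ℝ)⁻¹ ^ Nat.count p n :=
    (prod_dist_le_inv_pow_iff hK).2 fun k hk => by
      simpa [spread_nth hinf] using hagree _ (Nat.nth_lt_of_lt_count hk)
  rw [hn]
  push_cast
  exact hz.trans (inv_pow_le_pow_mul_rpow (by exact_mod_cast hK) (hp n))

theorem two_mul_le_dimH_range_spread (hK : 2 ≤ K) {α : ℝ≥0} (hα : 0 < α) {C : ℕ}
    (hp : ∀ m : ℕ, (α : ℝ) * m ≤ Nat.count p m + C) (a b : ℕ → Fin K) :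
    2 * (α : ℝ≥0∞) ≤ dimH (range (Prod.map (spread p a) (spread p b))) := by
  have hinf := Nat.infinite_setOf_of_forall_le_count (by exact_mod_cast hα) hp
  have h := (holderOnWith_subseq hK hp hinf a b).dimH_image_le hα
  have himage : Prod.map (subseq p) (subseq p) '' range (Prod.map (spread p a) (spread p b)) =
      univ :=
    eq_univ_of_forall fun z => ⟨_, mem_range_self z, prodMap_subseq_spread hinf a b z⟩
  rwa [himage, dimH_univ_prod hK, ENNReal.le_div_iff_mul_le (.inl (by simpa using hα.ne'))
    (.inl ENNReal.coe_ne_top)] at h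

end Spread

theorem two_le_dimH_of_range_spread_subset (hK : 2 ≤ K) {S : Set (SymbSp K × SymbSp K)}
    (F : ℕ → ℕ → Prop) [∀ q, DecidablePred (F q)] (a b : ℕ → ℕ → Fin K)
    (hF : ∀ q m, (q + 1) * Nat.count (F q) m ≤ m + (q + 1))
    (hS : ∀ q, range (Prod.map (spread (fun i => ¬F q i) (a q))
      (spread (fun i => ¬F q i) (b q))) ⊆ S) : 2 ≤ dimH S := by
  have hlim : Tendsto (fun q : ℕ => 2 * (((q : ℝ≥0) / (q + 1) : ℝ≥0) : ℝ≥0∞)) atTop (𝓝 2) := by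
    simpa using ENNReal.Tendsto.const_mul
      (ENNReal.tendsto_coe.2 (tendsto_natCast_div_add_atTop (1 : ℝ≥0)))
      (.inr ENNReal.ofNat_ne_top)
  refine le_of_tendsto hlim (eventually_atTop.2 ⟨1, fun q hq => ?_⟩)
  have hα : 0 < (q : ℝ≥0) / (q + 1) := div_pos (by exact_mod_cast hq) (by positivity)
  exact (two_mul_le_dimH_range_spread hK hα (C := 1)
    (fun m => by simpa using Nat.le_count_not_of_mul_count_le (hF q) m) _ _).trans
      (dimH_mono (hS q))

theorem mul_count_modEq_zero_le (q m : ℕ) :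
    (q + 1) * Nat.count (· ≡ 0 [MOD q + 1]) m ≤ m + (q + 1) := by
  rw [Nat.count_modEq_card m (by omega : 0 < q + 1) 0, mul_add]
  have := Nat.mul_div_le m (q + 1)
  split_ifs <;> omega

theorem spread_mem_distSet (hK : 2 ≤ K) (q : ℕ) {a b : Fin K} (hab : a ≠ b)
    (z : SymbSp K × SymbSp K) :
    Prod.map (spread (fun i => ¬i ≡ 0 [MOD q + 1]) fun _ => a)
      (spread (fun i => ¬i ≡ 0 [MOD q + 1]) fun _ => b) z ∈ DistSet K := by
  refine mem_distSet_of_forall_exists_ne hK (q + 1) fun i => ?_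
  have hdiv := Nat.div_add_mod (i + q) (q + 1)
  have hmod := Nat.mod_lt (i + q) (by omega : 0 < q + 1)
  -- the least multiple of `q + 1` that is at least `i`
  set P := (q + 1) * ((i + q) / (q + 1))
  have hP : P ≡ 0 [MOD q + 1] := (Nat.mul_mod_right _ _).trans (Nat.zero_mod _).symm
  refine ⟨P - i, by omega, ?_⟩
  rw [Nat.sub_add_cancel (by omega)]
  simpa [spread_of_not (p := fun i => ¬i ≡ 0 [MOD q + 1]) (not_not.2 hP)] using hab

def proxBlocks (q i : ℕ) : Prop := ∃ j, ∃ d < j, i = (q + 1) * j ^ 2 + d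

/-- A block position `(q + 1) j² + d < m` has `j ≤ J := √(m / (q + 1))`, and there are at most
`J (J + 1) / 2 ≤ J²` pairs `d < j ≤ J`. -/
theorem mul_count_proxBlocks_le (q m : ℕ) [DecidablePred (proxBlocks q)] :
    (q + 1) * Nat.count (proxBlocks q) m ≤ m := by
  set J := Nat.sqrt (m / (q + 1))
  have hsub : (Finset.range m).filter (proxBlocks q) ⊆
      ((Finset.range (J + 1)).sigma Finset.range).image fun jd => (q + 1) * jd.1 ^ 2 + jd.2 := by
    intro i hi
    obtain ⟨him, j, d, hdj, rfl⟩ := by simpa only [Finset.mem_filter, Finset.mem_range] using hi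
    refine Finset.mem_image.2 ⟨⟨j, d⟩, Finset.mem_sigma.2 ⟨?_, Finset.mem_range.2 hdj⟩, rfl⟩
    rw [Finset.mem_range, Nat.lt_succ_iff, Nat.le_sqrt', Nat.le_div_iff_mul_le q.succ_pos]
    linarith
  have hcard : Nat.count (proxBlocks q) m ≤ J * J := by
    have hsum := Finset.sum_range_id_mul_two (J + 1)
    rw [Nat.add_sub_cancel] at hsum
    calc Nat.count (proxBlocks q) m ≤ ((Finset.range (J + 1)).sigma Finset.range).card :=
          (Nat.count_eq_card_filter_range _ _).trans_le
            ((Finset.card_le_card hsub).trans Finset.card_image_le)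
      _ = ∑ j ∈ Finset.range (J + 1), j := by simp [Finset.card_sigma]
      _ ≤ J * J := by nlinarith [Nat.le_mul_self J]
  calc (q + 1) * Nat.count (proxBlocks q) m ≤ (q + 1) * (m / (q + 1)) :=
        Nat.mul_le_mul_left _ (hcard.trans (Nat.sqrt_le _))
    _ ≤ m := Nat.mul_div_le m (q + 1)

theorem spread_mem_proxSet (hK : 2 ≤ K) (q : ℕ) [DecidablePred (proxBlocks q)] (c : ℕ → Fin K)
    (z : SymbSp K × SymbSp K) :
    Prod.map (spread (fun i => ¬proxBlocks q i) c) (spread (fun i => ¬proxBlocks q i) c) z ∈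
      ProxSet K := by
  refine mem_proxSet_of_forall_exists hK fun n N => ⟨(q + 1) * max n N ^ 2, ?_, fun t ht => ?_⟩
  · nlinarith [le_max_right n N, Nat.le_self_pow two_ne_zero (max n N)]
  · have hblock : proxBlocks q (t + (q + 1) * max n N ^ 2) :=
      ⟨max n N, t, by omega, by ring⟩
    simp [spread_of_not (p := fun i => ¬proxBlocks q i) (not_not.2 hblock)]

theorem two_le_dimH_distSet (hK : 2 ≤ K) : 2 ≤ dimH (DistSet K) := by
  have hab : (⟨0, by omega⟩ : Fin K) ≠ ⟨1, by omega⟩ := by simp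
  exact two_le_dimH_of_range_spread_subset hK (fun q i => i ≡ 0 [MOD q + 1]) _ _
    mul_count_modEq_zero_le fun q => range_subset_iff.2 (spread_mem_distSet hK q hab)

open Classical in
theorem two_le_dimH_proxSet (hK : 2 ≤ K) : 2 ≤ dimH (ProxSet K) :=
  two_le_dimH_of_range_spread_subset hK proxBlocks (fun _ _ => ⟨0, by omega⟩)
    (fun _ _ => ⟨0, by omega⟩)
    (fun q m => (mul_count_proxBlocks_le q m).trans (Nat.le_add_right _ _))
    fun q => range_subset_iff.2 (spread_mem_proxSet hK q _)

end SymbSp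

/-- For `K ≥ 2`: `dim_H Asym(σ_K) = 1` and
`dim_H Prox(σ_K) = dim_H Dist(σ_K) = dim_H LY(σ_K) = 2`. -/
theorem statement_7 (K : ℕ) (hK : 2 ≤ K) :
    dimH (AsymSet K) = 1 ∧ dimH (ProxSet K) = 2 ∧ dimH (DistSet K) = 2 ∧
      dimH (LYset K) = 2 := by
  have hle_two (S : Set (SymbSp K × SymbSp K)) : dimH S ≤ 2 :=
    (dimH_mono (subset_univ S)).trans_eq (SymbSp.dimH_univ_prod hK)
  have hProx : dimH (ProxSet K) = 2 := le_antisymm (hle_two _) (SymbSp.two_le_dimH_proxSet hK)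
  have hLY : 2 ≤ dimH (LYset K) := by
    have h := dimH_mono (subset_sdiff_union (ProxSet K) (AsymSet K))
    rw [dimH_union, hProx, SymbSp.dimH_asymSet hK] at h
    exact (le_max_iff.1 h).resolve_right (by norm_num)
  exact ⟨SymbSp.dimH_asymSet hK, hProx, le_antisymm (hle_two _) (SymbSp.two_le_dimH_distSet hK),
    le_antisymm (hle_two _) hLY⟩
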